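/- Let Γ be a countably infinite group, let (X,μ) be a standard probability space with a measure-preserving Γ-action that is mixing, and let (Y,ν) be a standard σ-finite measure space (ν ≠ 0) with a nonsingular Γ-action that is properly ergodic. Then the diagonal action of Γ on (X × Y, μ × ν), g·(x,y) = (g·x, g·y), is ergodic. -/

import Mathlib

/-!
Let `E` be an invariant set with sections `E_y`. Since `g • E_y = E_{g • y}`, the function
`y ↦ μ(E_y)` is invariant, hence a.e. equal to a constant `a`, and `a ∈ {0, 1}` is the claim.
Otherwise a countable measure-dense family provides a set `A` for which
`Z = {y | μ(E_y ∆ A) < ε, μ(E_y) = a}` is not null. By mixing, `μ(A ∩ g • E_y)` tends to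
`μ(A) a < a - ε`, whereas `g • y ∈ Z` forces `μ(A ∩ g • E_y) > a - ε`: every orbit meets `Z`
finitely often. In a properly ergodic action such a set is null: the least value on `Z ∩ orbit`
of a Borel injection into `ℝ` is an invariant function, hence a.e. constant, and a finite
constant would put a conull level set inside a single orbit.
-/

open MeasureTheory Filter

/-- A (not necessarily measure-preserving) action of `Γ` on a measure space is ergodic if
every invariant measurable set is null or conull. -/
def IsErgodicAction {Γ X : Type*} [MeasurableSpace X] (μ : Measure X)
    (act : Γ → X → X) : Prop :=
  ∀ E : Set X, MeasurableSet E → (∀ g : Γ, act g '' E = E) → μ E = 0 ∨ μ Eᶜ = 0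


open MulAction
open scoped Pointwise symmDiff Topology

theorem smul_preimage_of_forall_smul_eq {Γ Y β : Type*} [Group Γ] [MulAction Γ Y] {f : Y → β}
    (hf : ∀ (g : Γ) y, f (g • y) = f y) (g : Γ) (U : Set β) : g • f ⁻¹' U = f ⁻¹' U := by
  ext y
  simp [Set.mem_smul_set_iff_inv_smul_mem, hf]

theorem IsErgodicAction.ae_eq_const_of_forall_smul_eq {Γ Y β : Type*} [Group Γ] [MulAction Γ Y]
    [MeasurableSpace Y] {ν : Measure Y} [MeasurableSpace β] [Nonempty β]
    [MeasurableSpace.CountablySeparated β] (h : IsErgodicAction ν (· • · : Γ → Y → Y))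
    {f : Y → β} (hfm : Measurable f) (hf : ∀ (g : Γ) y, f (g • y) = f y) :
    ∃ c, f =ᵐ[ν] Function.const Y c :=
  exists_eventuallyEq_const_of_forall_separating MeasurableSet fun U hU ↦
    (h _ (hfm hU) (smul_preimage_of_forall_smul_eq hf · U)).symm.imp ae_iff.2
      measure_eq_zero_iff_ae_notMem.1

section FiniteReturns

variable (Γ : Type*) {Y : Type*} [Group Γ] [MulAction Γ Y]

noncomputable def orbitInf (F : Y → EReal) (y : Y) : EReal := ⨅ g : Γ, F (g • y)

variable {Γ}

theorem orbitInf_smul (F : Y → EReal) (h : Γ) (y : Y) :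
    orbitInf Γ F (h • y) = orbitInf Γ F y := by
  simp_rw [orbitInf, smul_smul]
  exact (Group.mulRight_bijective h).surjective.iInf_comp fun g ↦ F (g • y)

theorem orbitInf_le (F : Y → EReal) (y : Y) : orbitInf Γ F y ≤ F y :=
  (iInf_le _ 1).trans_eq (congrArg F (one_smul Γ y))

theorem measurable_orbitInf [MeasurableSpace Y] [Countable Γ] [MeasurableConstSMul Γ Y]
    {F : Y → EReal} (hF : Measurable F) : Measurable (orbitInf Γ F) :=
  .iInf fun g ↦ hF.comp (measurable_const_smul g)

theorem exists_smul_eq_orbitInf {F : Y → EReal}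
    (hfin : ∀ y, F y ≠ ⊤ → {g : Γ | F (g • y) ≠ ⊤}.Finite) {y : Y} (hy : orbitInf Γ F y ≠ ⊤) :
    ∃ g : Γ, F (g • y) = orbitInf Γ F y := by
  obtain ⟨g₀, hg₀⟩ : ∃ g₀ : Γ, F (g₀ • y) ≠ ⊤ := by
    by_contra! h
    exact hy (iInf_eq_top.2 h)
  have hrange : (Set.range fun g : Γ ↦ F (g • g₀ • y)) ⊆
      insert ⊤ ((fun g : Γ ↦ F (g • g₀ • y)) '' {g | F (g • g₀ • y) ≠ ⊤}) := by
    rintro _ ⟨g, rfl⟩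
    by_cases hg : F (g • g₀ • y) = ⊤
    · exact Or.inl hg
    · exact Or.inr ⟨g, hg, rfl⟩
  obtain ⟨g, hg⟩ := (Set.range_nonempty _).csInf_mem
    ((((hfin _ hg₀).image _).insert ⊤).subset hrange)
  exact ⟨g * g₀, by rw [mul_smul]; exact (hg : F (g • g₀ • y) = _).trans (orbitInf_smul F g₀ y)⟩

theorem measure_eq_zero_of_finite_returns [MeasurableSpace Y] [Countable Γ]
    [MeasurableConstSMul Γ Y] [StandardBorelSpace Y] {ν : Measure Y} (hν : ν ≠ 0)
    (herg : IsErgodicAction ν (· • · : Γ → Y → Y)) (hproper : ∀ y, ν (orbit Γ y) = 0)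
    {W : Set Y} (hW : MeasurableSet W) (hfin : ∀ y ∈ W, {g : Γ | g • y ∈ W}.Finite) :
    ν W = 0 := by
  classical
  obtain ⟨ι, hι⟩ := exists_measurableEmbedding_real Y
  set F : Y → EReal := fun z ↦ if z ∈ W then (ι z : EReal) else ⊤
  have hF_ne_top : ∀ z, F z ≠ ⊤ ↔ z ∈ W := fun z ↦ by by_cases hz : z ∈ W <;> simp [F, hz]
  have hF_inj : ∀ z z', F z ≠ ⊤ → F z = F z' → z = z' := fun z z' hz hzz' ↦ by
    have hz' := (hF_ne_top z').1 (hzz' ▸ hz)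
    simp only [F, if_pos ((hF_ne_top z).1 hz), if_pos hz', EReal.coe_eq_coe_iff] at hzz'
    exact hι.injective hzz'
  have hfin' : ∀ y, F y ≠ ⊤ → {g : Γ | F (g • y) ≠ ⊤}.Finite := by
    simpa only [hF_ne_top] using hfin
  have hF : Measurable F := .ite hW (measurable_coe_real_ereal.comp hι.measurable) measurable_const
  obtain ⟨c, hc⟩ := herg.ae_eq_const_of_forall_smul_eq (measurable_orbitInf hF) (orbitInf_smul F)
  have hc_null : ν {y | orbitInf Γ F y ≠ c} = 0 := ae_iff.1 hc
  have hc_top : c = ⊤ := by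
    by_contra hc_top
    have : (ae ν).NeBot := ae_neBot.2 hν
    obtain ⟨y₀, hy₀ : orbitInf Γ F y₀ = c⟩ := hc.exists
    obtain ⟨g₀, hg₀⟩ := exists_smul_eq_orbitInf hfin' (hy₀ ▸ hc_top)
    have hsub : {y | orbitInf Γ F y = c} ⊆ orbit Γ (g₀ • y₀) := by
      intro y (hy : orbitInf Γ F y = c)
      obtain ⟨g, hg⟩ := exists_smul_eq_orbitInf hfin' (hy ▸ hc_top)
      have : g • y = g₀ • y₀ := hF_inj _ _ (hg ▸ hy ▸ hc_top) (by rw [hg, hg₀, hy, hy₀])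
      exact ⟨g⁻¹, by simp [← this]⟩
    refine hν (Measure.measure_univ_eq_zero.1 (measure_mono_null (fun y _ ↦ em _)
      (measure_union_null (measure_mono_null hsub (hproper _)) hc_null)))
  refine measure_mono_null (fun y hy ↦ show orbitInf Γ F y ≠ c from fun h ↦ ?_) hc_null
  exact (hF_ne_top y).2 hy (top_le_iff.1 (hc_top ▸ h ▸ orbitInf_le F y))

end FiniteReturns

theorem measureReal_le_measureReal_inter_add_symmDiff {α : Type*} [MeasurableSpace α]
    {μ : Measure α} [IsFiniteMeasure μ] (s t : Set α) :
    μ.real t ≤ μ.real (s ∩ t) + μ.real (s ∆ t) :=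
  calc μ.real t ≤ μ.real ((s ∩ t) ∪ (s ∆ t)) := measureReal_mono fun x hx ↦ by
        by_cases hxs : x ∈ s
        · exact Or.inl ⟨hxs, hx⟩
        · exact Or.inr (Or.inr ⟨hx, hxs⟩)
    _ ≤ μ.real (s ∩ t) + μ.real (s ∆ t) := measureReal_union_le _ _

section Mixing

variable {Γ X : Type*} [Group Γ] [MulAction Γ X] [MeasurableSpace X] {μ : Measure X}
  [IsProbabilityMeasure μ] [SMulInvariantMeasure Γ X μ]

theorem finite_setOf_measureReal_smul_symmDiff_lt {A B : Set X}
    (hmix : Tendsto (fun g : Γ ↦ μ (A ∩ g • B)) cofinite (𝓝 (μ A * μ B))) {ε : ℝ}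
    (hε : 3 * ε ≤ μ.real B * (1 - μ.real B)) (hAB : μ.real (B ∆ A) < ε) :
    {g : Γ | μ.real ((g • B) ∆ A) < ε}.Finite := by
  set a := μ.real B
  have hmix' : Tendsto (fun g : Γ ↦ μ.real (A ∩ g • B)) cofinite (𝓝 (μ.real A * a)) := by
    have := (ENNReal.tendsto_toReal (by finiteness)).comp hmix
    rwa [ENNReal.toReal_mul] at this
  have hε_pos : 0 < ε := measureReal_nonneg.trans_lt hAB
  have ha_le : a ≤ 1 := measureReal_le_one
  have hA : μ.real A < a + ε := by
    have := measureReal_le_measureReal_inter_add_symmDiff (μ := μ) B A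
    linarith [measureReal_mono (μ := μ) (Set.inter_subset_left : B ∩ A ⊆ B)]
  have ha_pos : 0 < a := by nlinarith
  -- `μ(A) a < (a + ε) a ≤ a² + ε ≤ a - 2ε`
  have hlim : μ.real A * a < a - ε := by nlinarith [mul_lt_mul_of_pos_right hA ha_pos]
  refine (eventually_cofinite.1 (hmix'.eventually_lt_const hlim)).subset fun g hg ↦ ?_
  have hgB : μ.real (g • B) = a := by rw [Measure.real, measure_smul]; rfl
  have := measureReal_le_measureReal_inter_add_symmDiff (μ := μ) A (g • B)
  rw [symmDiff_comm] at this
  exact not_lt.2 (by linarith [hg.out])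

end Mixing

def IsMixingAction (Γ : Type*) {X : Type*} [SMul Γ X] [MeasurableSpace X] (μ : Measure X) :
    Prop :=
  ∀ A B : Set X, MeasurableSet A → MeasurableSet B →
    Tendsto (fun g : Γ ↦ μ (A ∩ g • B)) cofinite (𝓝 (μ A * μ B))

theorem MeasureTheory.Measure.measure_prod_null_of_ae_null_right {X Y : Type*} [MeasurableSpace X]
    [MeasurableSpace Y] {μ : Measure X} {ν : Measure Y} [SFinite μ] [SFinite ν]
    {s : Set (X × Y)} (hs : MeasurableSet s) (h : ∀ᵐ y ∂ν, μ ((·, y) ⁻¹' s) = 0) :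
    μ.prod ν s = 0 := by
  rw [Measure.prod_apply_symm hs, lintegral_congr_ae h, lintegral_zero]

theorem preimage_prodMk_smul {Γ X Y : Type*} [Group Γ] [MulAction Γ X] [MulAction Γ Y]
    {E : Set (X × Y)} (hE : ∀ g : Γ, g • E = E) (g : Γ) (y : Y) :
    (·, g • y) ⁻¹' E = g • ((·, y) ⁻¹' E) := by
  ext x
  have := Set.mem_smul_set_iff_inv_smul_mem (a := g) (A := E) (x := (x, g • y))
  rw [hE g, Prod.smul_mk, inv_smul_smul] at this
  rw [Set.mem_smul_set_iff_inv_smul_mem]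
  exact this

section Product

variable {Γ X Y : Type*} [Group Γ] [MulAction Γ X] [MulAction Γ Y] [Countable Γ]
  [MeasurableSpace X] [MeasurableSpace Y] [MeasurableConstSMul Γ Y] [StandardBorelSpace Y]
  {μ : Measure X} [IsProbabilityMeasure μ] [SMulInvariantMeasure Γ X μ] {ν : Measure Y}
  {E : Set (X × Y)}

theorem measure_setOf_section_near_eq_zero (hmix : IsMixingAction Γ μ) (hν : ν ≠ 0)
    (herg : IsErgodicAction ν (· • · : Γ → Y → Y)) (hproper : ∀ y, ν (orbit Γ y) = 0)
    (hE : MeasurableSet E) (hinv : ∀ g : Γ, g • E = E) {A : Set X} (hA : MeasurableSet A)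
    {a ε : ℝ} (hε : 3 * ε ≤ a * (1 - a)) :
    ν {y | μ.real (((·, y) ⁻¹' E) ∆ A) < ε ∧ μ.real ((·, y) ⁻¹' E) = a} = 0 := by
  refine measure_eq_zero_of_finite_returns hν herg hproper ?_ fun y hy ↦ ?_
  · have hsymm : ∀ y, ((·, y) ⁻¹' E) ∆ A = (·, y) ⁻¹' (E ∆ (A ×ˢ Set.univ)) := fun y ↦ by
      rw [Set.preimage_symmDiff, Set.mk_preimage_prod_left (Set.mem_univ y)]
    refine MeasurableSet.inter ?_ ?_
    · simp only [hsymm]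
      exact (measurable_measure_prodMk_right (hE.symmDiff (hA.prod .univ))).ennreal_toReal
        measurableSet_Iio
    · exact (measurable_measure_prodMk_right hE).ennreal_toReal (measurableSet_singleton a)
  · obtain ⟨hyA, hya⟩ := hy
    refine (finite_setOf_measureReal_smul_symmDiff_lt (hmix A _ hA (measurable_prodMk_right hE))
      (hya ▸ hε) hyA).subset fun g hg ↦ ?_
    show μ.real ((g • _) ∆ A) < ε
    rw [← preimage_prodMk_smul hinv]
    exact hg.1

theorem not_ae_measureReal_section_eq [IsSeparable μ] (hmix : IsMixingAction Γ μ) (hν : ν ≠ 0)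
    (herg : IsErgodicAction ν (· • · : Γ → Y → Y)) (hproper : ∀ y, ν (orbit Γ y) = 0)
    (hE : MeasurableSet E) (hinv : ∀ g : Γ, g • E = E) {a : ℝ} (ha₀ : 0 < a) (ha₁ : a < 1) :
    ¬ ∀ᵐ y ∂ν, μ.real ((·, y) ⁻¹' E) = a := by
  intro h
  set ε := a * (1 - a) / 3 with hε_def
  have hε : 0 < ε := by positivity
  obtain ⟨𝒜, h𝒜_count, h𝒜⟩ := exists_countable_measureDense μ
  have hcover : {y | μ.real ((·, y) ⁻¹' E) = a} ⊆
      ⋃ A ∈ 𝒜, {y | μ.real (((·, y) ⁻¹' E) ∆ A) < ε ∧ μ.real ((·, y) ⁻¹' E) = a} := by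
    intro y hy
    obtain ⟨A, hA𝒜, hyA⟩ :=
      h𝒜.approx _ (measurable_prodMk_right hE) (measure_ne_top μ _) ε hε
    exact Set.mem_biUnion hA𝒜 ⟨ENNReal.toReal_lt_of_lt_ofReal hyA, hy⟩
  have hnull : ν {y | μ.real ((·, y) ⁻¹' E) = a} = 0 :=
    measure_mono_null hcover <| (measure_biUnion_null_iff h𝒜_count).2 fun A hA ↦
      measure_setOf_section_near_eq_zero hmix hν herg hproper hE hinv (h𝒜.measurable A hA)
        (by rw [hε_def]; linarith)
  have : (ae ν).NeBot := ae_neBot.2 hν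
  obtain ⟨y, hy, hy'⟩ := (h.and (measure_eq_zero_iff_ae_notMem.1 hnull)).exists
  exact hy' hy

theorem IsErgodicAction.prod_of_isMixingAction [IsSeparable μ] [SFinite ν]
    (hmix : IsMixingAction Γ μ) (hν : ν ≠ 0) (herg : IsErgodicAction ν (· • · : Γ → Y → Y))
    (hproper : ∀ y, ν (orbit Γ y) = 0) :
    IsErgodicAction (μ.prod ν) (· • · : Γ → X × Y → X × Y) := by
  intro E hE hinv
  replace hinv : ∀ g : Γ, g • E = E := hinv
  have hf : Measurable fun y ↦ μ.real ((·, y) ⁻¹' E) :=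
    (measurable_measure_prodMk_right hE).ennreal_toReal
  have hf_inv (g : Γ) (y : Y) : μ.real ((·, g • y) ⁻¹' E) = μ.real ((·, y) ⁻¹' E) := by
    rw [preimage_prodMk_smul hinv, Measure.real, measure_smul]; rfl
  obtain ⟨a, ha⟩ := herg.ae_eq_const_of_forall_smul_eq hf hf_inv
  replace ha : ∀ᵐ y ∂ν, μ.real ((·, y) ⁻¹' E) = a := ha
  have : (ae ν).NeBot := ae_neBot.2 hν
  obtain ⟨y₀, hy₀ : μ.real ((·, y₀) ⁻¹' E) = a⟩ := ha.exists
  rcases (hy₀ ▸ measureReal_nonneg : 0 ≤ a).eq_or_lt with ha₀ | ha₀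
  · refine .inl (Measure.measure_prod_null_of_ae_null_right hE (ha.mono fun y hy ↦ ?_))
    exact (measureReal_eq_zero_iff (measure_ne_top μ _)).1 (hy.trans ha₀.symm)
  rcases (hy₀ ▸ measureReal_le_one : a ≤ 1).eq_or_lt with ha₁ | ha₁
  · refine .inr (Measure.measure_prod_null_of_ae_null_right hE.compl (ha.mono fun y hy ↦ ?_))
    rw [Set.preimage_compl, ← measureReal_eq_zero_iff (measure_ne_top μ _),
      probReal_compl_eq_one_sub (measurable_prodMk_right hE), hy, ha₁, sub_self]
  exact absurd ha (not_ae_measureReal_section_eq hmix hν herg hproper hE hinv ha₀ ha₁)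

end Product

theorem stmt_14_general {Γ X Y : Type*} [Group Γ] [Countable Γ]
    [MeasurableSpace X] [StandardBorelSpace X]
    [MeasurableSpace Y] [StandardBorelSpace Y]
    (μ : Measure X) [IsProbabilityMeasure μ]
    (ν : Measure Y) [SigmaFinite ν] (hν : ν ≠ 0)
    (T : Γ → X → X) (hT1 : ∀ x : X, T 1 x = x)
    (hTmul : ∀ (g h : Γ) (x : X), T (g * h) x = T g (T h x))
    (hTmp : ∀ g : Γ, MeasurePreserving (T g) μ μ)
    (hmix : ∀ A B : Set X, MeasurableSet A → MeasurableSet B →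
      Tendsto (fun g : Γ => μ (A ∩ T g '' B)) cofinite (nhds (μ A * μ B)))
    (S : Γ → Y → Y) (hS1 : ∀ y : Y, S 1 y = y)
    (hSmul : ∀ (g h : Γ) (y : Y), S (g * h) y = S g (S h y))
    (hSns : ∀ g : Γ, Measure.QuasiMeasurePreserving (S g) ν ν)
    (hSerg : IsErgodicAction ν S)
    (hSproper : ∀ y : Y, ν (Set.range fun g : Γ => S g y) = 0) :
    IsErgodicAction (μ.prod ν) (fun (g : Γ) (p : X × Y) => (T g p.1, S g p.2)) := by
  let _ : MulAction Γ X := { smul := T, one_smul := hT1, mul_smul := hTmul }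
  let _ : MulAction Γ Y := { smul := S, one_smul := hS1, mul_smul := hSmul }
  have : SMulInvariantMeasure Γ X μ := ⟨fun g _ hs ↦ (hTmp g).measure_preimage hs.nullMeasurableSet⟩
  have : MeasurableConstSMul Γ Y := ⟨fun g ↦ (hSns g).measurable⟩
  exact IsErgodicAction.prod_of_isMixingAction hmix hν hSerg hSproper

theorem stmt_14 {Γ X Y : Type*} [Group Γ] [Countable Γ] [Infinite Γ]
    [MeasurableSpace X] [StandardBorelSpace X]
    [MeasurableSpace Y] [StandardBorelSpace Y]
    (μ : Measure X) [IsProbabilityMeasure μ]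
    (ν : Measure Y) [SigmaFinite ν] (hν : ν ≠ 0)
    (T : Γ → X → X) (hT1 : ∀ x : X, T 1 x = x)
    (hTmul : ∀ (g h : Γ) (x : X), T (g * h) x = T g (T h x))
    (hTmp : ∀ g : Γ, MeasurePreserving (T g) μ μ)
    (hmix : ∀ A B : Set X, MeasurableSet A → MeasurableSet B →
      Tendsto (fun g : Γ => μ (A ∩ T g '' B)) cofinite (nhds (μ A * μ B)))
    (S : Γ → Y → Y) (hS1 : ∀ y : Y, S 1 y = y)
    (hSmul : ∀ (g h : Γ) (y : Y), S (g * h) y = S g (S h y))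
    (hSns : ∀ g : Γ, Measure.QuasiMeasurePreserving (S g) ν ν)
    (hSerg : IsErgodicAction ν S)
    (hSproper : ∀ y : Y, ν (Set.range fun g : Γ => S g y) = 0) :
    IsErgodicAction (μ.prod ν) (fun (g : Γ) (p : X × Y) => (T g p.1, S g p.2)) :=
  stmt_14_general μ ν hν T hT1 hTmul hTmp hmix S hS1 hSmul hSns hSerg hSproper
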